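/- Suppose Assumption 5 holds. Then there exists a real number C₁ ∈ [1,∞) such that ∫ ψ̃(z') S(z,dz') ≤ C₁ and |S^n − σ|(z,B) ≤ C₁ ρ^n for all z ∈ Z, Borel B ⊆ Z and n ≥ 0, where |S^n − σ|(z,·) denotes the total variation of the signed measure S^n(z,·) − σ and ρ is the ergodicity rate from Assumption 5. -/

import Mathlib

open MeasureTheory Filter Topology

noncomputable section

namespace Stmt6

/-- Total variation of a complex-valued set function `m` on the set `B`:
the supremum of `∑ |m(Aᵢ)|` over finite disjoint measurable families `Aᵢ ⊆ B`. -/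
def setVar {α : Type*} [MeasurableSpace α] (m : Set α → ℂ) (B : Set α) : ℝ :=
  sSup {r : ℝ | ∃ (k : ℕ) (A : Fin k → Set α),
    (∀ i, MeasurableSet (A i)) ∧ (∀ i j, i ≠ j → Disjoint (A i) (A j)) ∧
    (∀ i, A i ⊆ B) ∧ r = ∑ i, ‖m (A i)‖}

/-- `n`-step iterates `S^n(z, ⬝)` of a transition kernel `S`. -/
def kernelIter {α : Type*} [MeasurableSpace α] (S : α → Measure α) : ℕ → α → Measure α
  | 0, z => Measure.dirac z
  | n + 1, z => (S z).bind (kernelIter S n)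

variable {dx dy : ℕ}

/-- The transition kernel `S((y,x), ⬝)` of the joint chain `{(Y_n, X_n)}`. -/
def Skernel (XS : Set (Fin dx → ℝ)) (YS : Set (Fin dy → ℝ))
    (P : XS → Measure XS) (Q : XS → Measure YS) (z : YS × XS) : Measure (YS × XS) :=
  (P z.2).bind fun x' => (Q x').map fun y' => (y', x')

/-- The invariant distribution `σ(dz)` of the joint chain. -/
def sigmaJoint (XS : Set (Fin dx → ℝ)) (YS : Set (Fin dy → ℝ))
    (Q : XS → Measure YS) (πm : Measure XS) : Measure (YS × XS) :=
  πm.bind fun x => (Q x).map fun y => (y, x)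

/-!
The joint chain lifts the hidden chain: `Sⁿ⁺¹(z, ·)` is `Pⁿ⁺¹(x, ·)` followed by one emission
`x ↦ Q(x, ·) ⊗ δₓ`, and `σ` is `π` followed by the same emission. Binding with a Markov kernel
does not increase the uniform distance `sup_B |μ B - ν B|` (split the space along a Hahn
decomposition of `μ - ν`), so the bound `K ρⁿ` of the hidden chain passes to the joint chain.
A total variation over disjoint pieces is at most twice that distance, whence `C₁ = 2K`, which
also dominates the moment `1 + K`.
-/

open scoped ENNReal

lemma sum_abs_le_two_mul_of_forall_abs_sum_le {ι : Type*} (s : Finset ι) (f : ι → ℝ)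
    {ε : ℝ} (h : ∀ t ⊆ s, |∑ i ∈ t, f i| ≤ ε) : ∑ i ∈ s, |f i| ≤ 2 * ε := by
  have hpos : ∑ i ∈ s with 0 ≤ f i, |f i| = ∑ i ∈ s with 0 ≤ f i, f i :=
    Finset.sum_congr rfl fun i hi => abs_of_nonneg (Finset.mem_filter.mp hi).2
  have hneg : ∑ i ∈ s with ¬0 ≤ f i, |f i| = -∑ i ∈ s with ¬0 ≤ f i, f i := by
    rw [← Finset.sum_neg_distrib]
    exact Finset.sum_congr rfl fun i hi => abs_of_neg (not_le.mp (Finset.mem_filter.mp hi).2)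
  have h₁ := (abs_le.mp (h _ (Finset.filter_subset (fun i => 0 ≤ f i) s))).2
  have h₂ := (abs_le.mp (h _ (Finset.filter_subset (fun i => ¬0 ≤ f i) s))).1
  rw [← Finset.sum_filter_add_sum_filter_not s (fun i => 0 ≤ f i), hpos, hneg]
  linarith

section TotalVariation

variable {α β : Type*} [MeasurableSpace α] [MeasurableSpace β] {μ ν : Measure α}

lemma abs_toReal_sub_le_iff {a b : ℝ≥0∞} (ha : a ≠ ∞) (hb : b ≠ ∞) {ε : ℝ} (hε : 0 ≤ ε) :
    |a.toReal - b.toReal| ≤ ε ↔ a ≤ b + ENNReal.ofReal ε ∧ b ≤ a + ENNReal.ofReal ε := by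
  have key : ∀ {c d : ℝ≥0∞}, c ≠ ∞ → d ≠ ∞ →
      (c ≤ d + ENNReal.ofReal ε ↔ c.toReal ≤ d.toReal + ε) := fun hc hd => by
    rw [← ENNReal.toReal_le_toReal hc (by finiteness), ENNReal.toReal_add hd ENNReal.ofReal_ne_top,
      ENNReal.toReal_ofReal hε]
  rw [key ha hb, key hb ha, abs_sub_le_iff]
  constructor <;> rintro ⟨h₁, h₂⟩ <;> constructor <;> linarith

lemma setVar_toReal_sub_le [IsFiniteMeasure μ] [IsFiniteMeasure ν] {ε : ℝ}
    (h : ∀ D, MeasurableSet D → |(μ D).toReal - (ν D).toReal| ≤ ε) (B : Set α) :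
    setVar (fun A => (((μ A).toReal - (ν A).toReal : ℝ) : ℂ)) B ≤ 2 * ε := by
  have hε : 0 ≤ ε := (abs_nonneg _).trans (h ∅ MeasurableSet.empty)
  refine Real.sSup_le ?_ (by positivity)
  rintro r ⟨k, A, hAm, hAd, -, rfl⟩
  simp only [Complex.norm_real, Real.norm_eq_abs]
  refine sum_abs_le_two_mul_of_forall_abs_sum_le _ _ fun t _ => ?_
  have hd : (t : Set (Fin k)).PairwiseDisjoint A := fun i _ j _ hij => hAd i j hij
  have hAt : ∀ i ∈ t, MeasurableSet (A i) := fun i _ => hAm i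
  convert h (⋃ i ∈ t, A i) (t.measurableSet_biUnion hAt) using 2
  rw [measure_biUnion_finset hd hAt, measure_biUnion_finset hd hAt,
    ENNReal.toReal_sum (fun i _ => measure_ne_top μ _),
    ENNReal.toReal_sum (fun i _ => measure_ne_top ν _), Finset.sum_sub_distrib]

lemma abs_toReal_sub_le_one [IsProbabilityMeasure μ] [IsProbabilityMeasure ν] (B : Set α) :
    |(μ B).toReal - (ν B).toReal| ≤ 1 := by
  have hμ : (μ B).toReal ≤ 1 := measureReal_le_one
  have hν : (ν B).toReal ≤ 1 := measureReal_le_one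
  rw [abs_sub_le_iff]
  constructor <;> linarith [ENNReal.toReal_nonneg (a := μ B), ENNReal.toReal_nonneg (a := ν B)]

lemma le_add_sub_restrict_compl [IsFiniteMeasure ν] {s : Set α}
    (hs : IsHahnDecomposition μ ν s) :
    μ ≤ ν + (μ.restrict sᶜ - ν.restrict sᶜ) := by
  calc μ = μ.restrict s + μ.restrict sᶜ :=
        (Measure.restrict_add_restrict_compl hs.measurableSet).symm
    _ ≤ ν.restrict s + ((μ.restrict sᶜ - ν.restrict sᶜ) + ν.restrict sᶜ) := by
      rw [Measure.sub_add_cancel_of_le hs.ge_on_compl]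
      exact add_le_add_left hs.le_on _
    _ = ν + (μ.restrict sᶜ - ν.restrict sᶜ) := by
      rw [add_comm (_ - _), ← add_assoc, Measure.restrict_add_restrict_compl hs.measurableSet]

lemma lintegral_le_lintegral_add_of_forall_le_add [IsFiniteMeasure μ] [IsFiniteMeasure ν]
    {ε : ℝ≥0∞} (h : ∀ D, MeasurableSet D → μ D ≤ ν D + ε) {f : α → ℝ≥0∞} (hf : ∀ x, f x ≤ 1) :
    ∫⁻ x, f x ∂μ ≤ ∫⁻ x, f x ∂ν + ε := by
  obtain ⟨s, hs⟩ := exists_isHahnDecomposition μ ν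
  calc ∫⁻ x, f x ∂μ ≤ ∫⁻ x, f x ∂(ν + (μ.restrict sᶜ - ν.restrict sᶜ)) :=
        lintegral_mono' (le_add_sub_restrict_compl hs) le_rfl
    _ ≤ ∫⁻ x, f x ∂ν + ∫⁻ _, 1 ∂(μ.restrict sᶜ - ν.restrict sᶜ) := by
        rw [lintegral_add_measure]
        gcongr with x
        exact hf x
    _ ≤ ∫⁻ x, f x ∂ν + ε := by
        rw [lintegral_one, Measure.sub_apply MeasurableSet.univ hs.ge_on_compl,
          Measure.restrict_apply_univ, Measure.restrict_apply_univ]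
        gcongr
        exact tsub_le_iff_left.mpr (h _ hs.measurableSet.compl)

lemma abs_bind_apply_toReal_sub_le [IsFiniteMeasure μ] [IsFiniteMeasure ν] {κ : α → Measure β}
    (hκ : Measurable κ) (hκ1 : ∀ x, κ x Set.univ ≤ 1) {ε : ℝ}
    (h : ∀ D, MeasurableSet D → |(μ D).toReal - (ν D).toReal| ≤ ε) {B : Set β}
    (hB : MeasurableSet B) :
    |((μ.bind κ) B).toReal - ((ν.bind κ) B).toReal| ≤ ε := by
  have hε : 0 ≤ ε := (abs_nonneg _).trans (h ∅ MeasurableSet.empty)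
  have hle : ∀ x, κ x B ≤ 1 := fun x => (measure_mono (Set.subset_univ B)).trans (hκ1 x)
  have hfin : ∀ m : Measure α, IsFiniteMeasure m → (m.bind κ) B ≠ ∞ := fun m _ => by
    rw [Measure.bind_apply hB hκ.aemeasurable]
    exact ((lintegral_mono hle).trans_lt (by simp)).ne
  rw [abs_toReal_sub_le_iff (hfin μ ‹_›) (hfin ν ‹_›) hε,
    Measure.bind_apply hB hκ.aemeasurable, Measure.bind_apply hB hκ.aemeasurable]
  have hD := fun D hD => (abs_toReal_sub_le_iff (measure_ne_top μ D) (measure_ne_top ν D) hε).mp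
    (h D hD)
  exact ⟨lintegral_le_lintegral_add_of_forall_le_add (fun D hD' => (hD D hD').1) hle,
    lintegral_le_lintegral_add_of_forall_le_add (fun D hD' => (hD D hD').2) hle⟩

end TotalVariation

section Iterates

variable {α β : Type*} [MeasurableSpace α] [MeasurableSpace β]

lemma measurable_kernelIter {S : α → Measure α} (hS : Measurable S) :
    ∀ n, Measurable (kernelIter S n)
  | 0 => Measure.measurable_dirac
  | n + 1 => (Measure.measurable_bind' (measurable_kernelIter hS n)).comp hS

lemma isProbabilityMeasure_kernelIter {S : α → Measure α} (hS : Measurable S)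
    (hprob : ∀ z, IsProbabilityMeasure (S z)) :
    ∀ n z, IsProbabilityMeasure (kernelIter S n z)
  | 0, _ => Measure.dirac.isProbabilityMeasure
  | n + 1, _ =>
    have := isProbabilityMeasure_kernelIter hS hprob n
    isProbabilityMeasure_bind (measurable_kernelIter hS n).aemeasurable (ae_of_all _ this)

lemma bind_map_eq_bind_comp (m : Measure β) {π : β → α} (hπ : Measurable π)
    {H : α → Measure β} (hH : Measurable H) : (m.map π).bind H = m.bind (H ∘ π) := by
  rw [← Measure.bind_dirac_eq_map m hπ,
    Measure.bind_bind (f := fun w => .dirac (π w))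
      (Measure.measurable_dirac.comp hπ).aemeasurable hH.aemeasurable]
  exact congrArg m.bind (funext fun w => Measure.dirac_bind hH (π w))

/-- If a kernel `S` on `β` moves its state by first moving `π z` with `P` and then choosing a
point of the fibre over the new state with `κ`, its iterates are those of `P` followed by `κ`. -/
lemma kernelIter_bind_comp_succ {P : α → Measure α} (hP : Measurable P) {κ : α → Measure β}
    (hκ : Measurable κ) {π : β → α} (hπ : Measurable π) (hκπ : ∀ x, (κ x).map π = .dirac x) :
    ∀ n z, kernelIter (fun z => (P (π z)).bind κ) (n + 1) z =
      (kernelIter P (n + 1) (π z)).bind κ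
  | 0, _ => by simp only [kernelIter, Measure.bind_dirac]
  | n + 1, z => by
    set H : α → Measure β := fun x => (kernelIter P (n + 1) x).bind κ
    have hH : Measurable H := (Measure.measurable_bind' hκ).comp (measurable_kernelIter hP _)
    have hfibre : ∀ x, (κ x).bind (H ∘ π) = H x := fun x => by
      rw [← bind_map_eq_bind_comp _ hπ hH, hκπ, Measure.dirac_bind hH]
    calc ((P (π z)).bind κ).bind (kernelIter (fun z => (P (π z)).bind κ) (n + 1))
        = ((P (π z)).bind κ).bind (H ∘ π) :=
          congrArg _ (funext (kernelIter_bind_comp_succ hP hκ hπ hκπ n))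
      _ = (P (π z)).bind H := by
          rw [Measure.bind_bind hκ.aemeasurable (hH.comp hπ).aemeasurable]
          exact congrArg _ (funext hfibre)
      _ = ((P (π z)).bind (kernelIter P (n + 1))).bind κ :=
          (Measure.bind_bind (measurable_kernelIter hP _).aemeasurable hκ.aemeasurable).symm

end Iterates

section JointChain

variable {α β : Type*} [MeasurableSpace α] [MeasurableSpace β]

def emission (Q : α → Measure β) (x : α) : Measure (β × α) :=
  (Q x).map fun y => (y, x)

variable {Q : α → Measure β}

open ProbabilityTheory in
lemma measurable_emission (hQm : Measurable Q) (hQprob : ∀ x, IsProbabilityMeasure (Q x)) :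
    Measurable (emission Q) := by
  have : IsMarkovKernel (⟨Q, hQm⟩ : Kernel α β) := ⟨hQprob⟩
  convert ((⟨Q, hQm⟩ : Kernel α β).prod Kernel.id).measurable
  ext1 x
  rw [Kernel.prod_apply, Kernel.id_apply, Measure.prod_dirac]
  rfl

instance isProbabilityMeasure_emission [∀ x, IsProbabilityMeasure (Q x)] (x : α) :
    IsProbabilityMeasure (emission Q x) :=
  Measure.isProbabilityMeasure_map measurable_prodMk_right.aemeasurable

lemma map_snd_emission [∀ x, IsProbabilityMeasure (Q x)] (x : α) :
    (emission Q x).map Prod.snd = .dirac x := by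
  rw [emission, Measure.map_map measurable_snd measurable_prodMk_right]
  simp [Function.comp_def, Measure.map_const]

lemma lintegral_bind_emission_fst_le {m : Measure α} [IsProbabilityMeasure m]
    (hQm : Measurable Q) (hQprob : ∀ x, IsProbabilityMeasure (Q x))
    {f : β → ℝ≥0∞} (hf : Measurable f) {c : ℝ≥0∞} (hfc : ∀ x, ∫⁻ y, f y ∂Q x ≤ c) :
    ∫⁻ w, f w.1 ∂(m.bind (emission Q)) ≤ c := by
  rw [Measure.lintegral_bind (f := fun w : β × α => f w.1)
    (measurable_emission hQm hQprob).aemeasurable (hf.comp measurable_fst).aemeasurable]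
  calc ∫⁻ x, ∫⁻ w, f w.1 ∂emission Q x ∂m = ∫⁻ x, ∫⁻ y, f y ∂Q x ∂m :=
        lintegral_congr fun x => lintegral_map (hf.comp measurable_fst) measurable_prodMk_right
    _ ≤ ∫⁻ _, c ∂m := lintegral_mono hfc
    _ = c := by simp

end JointChain

section Assumption5

variable {XS : Set (Fin dx → ℝ)} {YS : Set (Fin dy → ℝ)}
  {P : XS → Measure XS} {Q : XS → Measure YS}

lemma sigmaJoint_eq_bind_emission (πm : Measure XS) :
    sigmaJoint XS YS Q πm = πm.bind (emission Q) := rfl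

lemma measurable_Skernel (hPm : Measurable P) (hQm : Measurable Q)
    (hQprob : ∀ x, IsProbabilityMeasure (Q x)) : Measurable (Skernel XS YS P Q) :=
  ((Measure.measurable_bind' (measurable_emission hQm hQprob)).comp hPm).comp measurable_snd

lemma kernelIter_Skernel_succ (hPm : Measurable P) (hQm : Measurable Q)
    (hQprob : ∀ x, IsProbabilityMeasure (Q x)) (n : ℕ) (z : YS × XS) :
    kernelIter (Skernel XS YS P Q) (n + 1) z = (kernelIter P (n + 1) z.2).bind (emission Q) :=
  have := hQprob
  kernelIter_bind_comp_succ hPm (measurable_emission hQm hQprob) measurable_snd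
    map_snd_emission n z

lemma isProbabilityMeasure_kernelIter_Skernel (hPm : Measurable P) (hQm : Measurable Q)
    (hPprob : ∀ x, IsProbabilityMeasure (P x)) (hQprob : ∀ x, IsProbabilityMeasure (Q x))
    (n : ℕ) (z : YS × XS) : IsProbabilityMeasure (kernelIter (Skernel XS YS P Q) n z) :=
  have := hQprob
  have := hPprob
  isProbabilityMeasure_kernelIter (measurable_Skernel hPm hQm hQprob)
    (fun _ => isProbabilityMeasure_bind (measurable_emission hQm hQprob).aemeasurable
      (ae_of_all _ isProbabilityMeasure_emission)) n z

lemma lintegral_Skernel_le (hQm : Measurable Q) (hPprob : ∀ x, IsProbabilityMeasure (P x))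
    (hQprob : ∀ x, IsProbabilityMeasure (Q x)) {ψ : YS → ℝ} (hψm : Measurable ψ) {K : ℝ}
    (hK : 0 ≤ K) (hQψ : ∀ x, ∫⁻ y, ENNReal.ofReal (ψ y) ∂(Q x) ≤ ENNReal.ofReal K)
    (z : YS × XS) :
    ∫⁻ z', ENNReal.ofReal (1 + ψ z'.1) ∂(Skernel XS YS P Q z) ≤ ENNReal.ofReal (1 + K) := by
  have := hPprob z.2
  refine lintegral_bind_emission_fst_le hQm hQprob (measurable_const.add hψm).ennreal_ofReal
    fun x => ?_
  have := hQprob x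
  calc ∫⁻ y, ENNReal.ofReal (1 + ψ y) ∂Q x ≤ ∫⁻ y, (1 + ENNReal.ofReal (ψ y)) ∂Q x :=
        lintegral_mono fun y => ENNReal.ofReal_add_le.trans_eq (by rw [ENNReal.ofReal_one])
    _ ≤ 1 + ENNReal.ofReal K := by
        rw [lintegral_add_left measurable_const, lintegral_const, measure_univ, mul_one]
        gcongr
        exact hQψ x
    _ = ENNReal.ofReal (1 + K) := by rw [ENNReal.ofReal_add zero_le_one hK, ENNReal.ofReal_one]

lemma isProbabilityMeasure_sigmaJoint (hQm : Measurable Q)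
    (hQprob : ∀ x, IsProbabilityMeasure (Q x)) (πm : Measure XS) [IsProbabilityMeasure πm] :
    IsProbabilityMeasure (sigmaJoint XS YS Q πm) :=
  have := hQprob
  isProbabilityMeasure_bind (measurable_emission hQm hQprob).aemeasurable
    (ae_of_all _ isProbabilityMeasure_emission)

lemma abs_kernelIter_Skernel_apply_sub_sigmaJoint_le (hPm : Measurable P) (hQm : Measurable Q)
    (hPprob : ∀ x, IsProbabilityMeasure (P x)) (hQprob : ∀ x, IsProbabilityMeasure (Q x))
    {K ρ : ℝ} (hK : 1 ≤ K) {πm : Measure XS} [IsProbabilityMeasure πm]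
    (hPerg : ∀ x, ∀ n : ℕ, ∀ B : Set XS, MeasurableSet B →
      |(kernelIter P n x B).toReal - (πm B).toReal| ≤ K * ρ ^ n)
    (z : YS × XS) (n : ℕ) {B : Set (YS × XS)} (hB : MeasurableSet B) :
    |(kernelIter (Skernel XS YS P Q) n z B).toReal - (sigmaJoint XS YS Q πm B).toReal|
      ≤ K * ρ ^ n := by
  cases n with
  | zero =>
    have := isProbabilityMeasure_kernelIter_Skernel hPm hQm hPprob hQprob 0 z
    have := isProbabilityMeasure_sigmaJoint hQm hQprob πm
    simpa using (abs_toReal_sub_le_one B).trans hK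
  | succ n =>
    have := hQprob
    have := isProbabilityMeasure_kernelIter hPm hPprob (n + 1) z.2
    rw [sigmaJoint_eq_bind_emission, kernelIter_Skernel_succ hPm hQm hQprob]
    exact abs_bind_apply_toReal_sub_le (measurable_emission hQm hQprob) (fun _ => prob_le_one)
      (hPerg z.2 (n + 1)) hB

end Assumption5

theorem joint_chain_geometric_ergodicity_general
    (XS : Set (Fin dx → ℝ)) (YS : Set (Fin dy → ℝ))
    (ψ : YS → ℝ) (hψm : Measurable ψ)
    -- Assumption 5
    (P : XS → Measure XS) (Q : XS → Measure YS)
    (hPm : Measurable P) (hQm : Measurable Q)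
    (hPprob : ∀ x, IsProbabilityMeasure (P x))
    (hQprob : ∀ x, IsProbabilityMeasure (Q x))
    (K : ℝ) (hK : 1 ≤ K) (ρ : ℝ)
    (πm : Measure XS) (hπm : IsProbabilityMeasure πm)
    (hQψ : ∀ x, ∫⁻ y, ENNReal.ofReal (ψ y) ∂(Q x) ≤ ENNReal.ofReal K)
    (hPerg : ∀ x, ∀ n : ℕ, ∀ B : Set XS, MeasurableSet B →
      |(kernelIter P n x B).toReal - (πm B).toReal| ≤ K * ρ ^ n) :
    ∃ C₁ : ℝ, 1 ≤ C₁ ∧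
      (∀ z : YS × XS,
        ∫⁻ z', ENNReal.ofReal (1 + ψ z'.1) ∂(Skernel XS YS P Q z) ≤ ENNReal.ofReal C₁) ∧
      (∀ z : YS × XS, ∀ n : ℕ, ∀ B : Set (YS × XS), MeasurableSet B →
        setVar
          (fun A => ((kernelIter (Skernel XS YS P Q) n z A).toReal
            - (sigmaJoint XS YS Q πm A).toReal : ℝ)) B ≤ C₁ * ρ ^ n) := by
  refine ⟨2 * K, by linarith, fun z => ?_, fun z n B _ => ?_⟩
  · exact (lintegral_Skernel_le hQm hPprob hQprob hψm (by linarith) hQψ z).trans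
      (ENNReal.ofReal_le_ofReal (by linarith))
  · have := isProbabilityMeasure_kernelIter_Skernel hPm hQm hPprob hQprob n z
    have := isProbabilityMeasure_sigmaJoint hQm hQprob πm
    calc _ ≤ 2 * (K * ρ ^ n) := setVar_toReal_sub_le (fun D hD =>
          abs_kernelIter_Skernel_apply_sub_sigmaJoint_le hPm hQm hPprob hQprob hK hPerg z n hD) B
      _ = 2 * K * ρ ^ n := by ring

/-- **Lemma 2.3**: under Assumption 5 there is `C₁ ∈ [1,∞)` with
`∫ ψ̃(z') S(z,dz') ≤ C₁` and `|Sⁿ − σ|(z,B) ≤ C₁ ρⁿ` for all `z`, Borel `B` and `n ≥ 0`. -/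
theorem joint_chain_geometric_ergodicity
    (XS : Set (Fin dx → ℝ)) (YS : Set (Fin dy → ℝ))
    (hXS : MeasurableSet XS) (hYS : MeasurableSet YS)
    (ψ : YS → ℝ) (hψpos : ∀ y, 0 < ψ y) (hψm : Measurable ψ)
    -- Assumption 5
    (P : XS → Measure XS) (Q : XS → Measure YS)
    (hPm : Measurable P) (hQm : Measurable Q)
    (hPprob : ∀ x, IsProbabilityMeasure (P x))
    (hQprob : ∀ x, IsProbabilityMeasure (Q x))
    (K : ℝ) (hK : 1 ≤ K) (ρ : ℝ) (hρ : ρ ∈ Set.Ioo (0 : ℝ) 1)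
    (πm : Measure XS) (hπm : IsProbabilityMeasure πm)
    (hQψ : ∀ x, ∫⁻ y, ENNReal.ofReal (ψ y) ∂(Q x) ≤ ENNReal.ofReal K)
    (hPerg : ∀ x, ∀ n : ℕ, ∀ B : Set XS, MeasurableSet B →
      |(kernelIter P n x B).toReal - (πm B).toReal| ≤ K * ρ ^ n) :
    ∃ C₁ : ℝ, 1 ≤ C₁ ∧
      (∀ z : YS × XS,
        ∫⁻ z', ENNReal.ofReal (1 + ψ z'.1) ∂(Skernel XS YS P Q z) ≤ ENNReal.ofReal C₁) ∧
      (∀ z : YS × XS, ∀ n : ℕ, ∀ B : Set (YS × XS), MeasurableSet B →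
        setVar
          (fun A => ((kernelIter (Skernel XS YS P Q) n z A).toReal
            - (sigmaJoint XS YS Q πm A).toReal : ℝ)) B ≤ C₁ * ρ ^ n) :=
  joint_chain_geometric_ergodicity_general XS YS ψ hψm P Q hPm hQm hPprob hQprob K hK ρ πm hπm hQψ
    hPerg

end Stmt6
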